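/- Let S be a locally C-finite semilattice. Then the Schützenberger representation Γ : ℓ¹(S) → ℓ¹(S) (from the convolution algebra to ℓ¹(S) with pointwise multiplication) is a continuous algebra isomorphism, and its inverse has operator norm at most 2^{C−1}. -/

import Mathlib

/-- The Schützenberger representation of a (possibly infinite) semilattice,
`(Γ a)(x) = Σ_{t : x ≼ t} a(t)` where `x ≼ t ↔ x * t = x`. -/
noncomputable def schutzRep {S : Type*} [Mul S] (a : S → ℂ) : S → ℂ :=
  fun x => ∑' t : {t : S // x * t = x}, (a t : ℂ)

/-- The convolution product on `ℓ¹(S)`: `(a * b)(z) = Σ_{(s,t) : s t = z} a(s) b(t)`. -/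
noncomputable def l1Conv {S : Type*} [Mul S] (a b : S → ℂ) : S → ℂ :=
  fun z => ∑' p : {p : S × S // p.1 * p.2 = z}, a (p : S × S).1 * b (p : S × S).2

/-!
View `(S, ≼)` as a poset whose principal down-sets have at most `C` elements. Then `Γ` is the action
`a ↦ (x ↦ Σ_t ζ(x, t) a(t))` of the zeta function of its incidence algebra, and the action of the
Möbius function `μ` inverts it because `ζ * μ = μ * ζ = 1`; the rearrangements behind
`Γ (M a) = (ζ * μ) a` are justified by absolute convergence. Such an action is bounded on `ℓ¹` by
the largest `ℓ¹`-norm of a column `t ↦ (x ↦ f(x, t))` of the kernel: this is `≤ C` for `ζ`, and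
`≤ 2^(C-1)` for `μ`: peeling off the elements `x` of `↓s` minimal-first, the recursion
`μ(x, s) = -Σ_{x < z ≤ s} μ(z, s)` shows that each of them at most doubles the column sum.
Multiplicativity holds because `x ≼ st` iff `x ≼ s` and `x ≼ t`, so `Γ (a * b) (x)` factors as
`(Σ_{x ≼ s} a(s)) (Σ_{x ≼ t} b(t))`.
-/

open Finset IncidenceAlgebra

section Moebius

variable {𝕜 S : Type*} [NormedRing 𝕜] [NormOneClass 𝕜] [PartialOrder S] [LocallyFiniteOrder S]
  [DecidableEq S]

theorem sum_norm_mu_le_two_pow {s : S} (T : Finset S) (hTs : ∀ x ∈ T, x ≤ s)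
    (hT : ∀ x ∈ T, ∀ y, x ≤ y → y ≤ s → y ∈ T) :
    ∑ x ∈ T, ‖mu 𝕜 x s‖ ≤ 2 ^ (#T - 1) := by
  induction T using Finset.strongInduction with
  | H T ih =>
    obtain rfl | hne := T.eq_empty_or_nonempty
    · simp
    obtain ⟨x, hxT, hxmin⟩ := Finset.exists_minimal hne
    by_cases hxs : x = s
    · subst hxs
      have : T = {x} := eq_singleton_iff_unique_mem.2
        ⟨hxT, fun y hy => le_antisymm (hTs y hy) (hxmin hy (hTs y hy))⟩
      simp [this]
    have hsT : s ∈ T.erase x := mem_erase.2 ⟨Ne.symm hxs, hT x hxT s (hTs x hxT) le_rfl⟩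
    have hT' : ∀ y ∈ T.erase x, ∀ z, y ≤ z → z ≤ s → z ∈ T.erase x := by
      intro y hy z hyz hzs
      obtain ⟨hyx, hyT⟩ := mem_erase.1 hy
      refine mem_erase.2 ⟨?_, hT y hyT z hyz hzs⟩
      rintro rfl
      exact hyx (le_antisymm hyz (hxmin hyT hyz))
    have hIH := ih _ (erase_ssubset hxT) (fun y hy => hTs y (mem_of_mem_erase hy)) hT'
    have hx : ‖mu 𝕜 x s‖ ≤ ∑ z ∈ T.erase x, ‖mu 𝕜 z s‖ := by
      rw [mu_eq_neg_sum_Ioc_of_ne hxs, norm_neg]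
      refine (norm_sum_le _ _).trans
        (sum_le_sum_of_subset_of_nonneg (fun z hz => ?_) fun _ _ _ => norm_nonneg _)
      obtain ⟨hxz, hzs⟩ := mem_Ioc.1 hz
      exact mem_erase.2 ⟨hxz.ne', hT x hxT z hxz.le hzs⟩
    have hcard : #T - 1 = (#(T.erase x) - 1) + 1 := by
      have := card_pos.2 ⟨s, hsT⟩
      rw [card_erase_of_mem hxT] at this ⊢
      omega
    calc ∑ z ∈ T, ‖mu 𝕜 z s‖ = ‖mu 𝕜 x s‖ + ∑ z ∈ T.erase x, ‖mu 𝕜 z s‖ :=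
          (add_sum_erase T _ hxT).symm
      _ ≤ 2 ^ (#(T.erase x) - 1) + 2 ^ (#(T.erase x) - 1) := add_le_add (hx.trans hIH) hIH
      _ = 2 ^ (#T - 1) := by rw [hcard, pow_succ]; ring

variable [LocallyFiniteOrderBot S]

theorem sum_Iic_norm_mu_le (s : S) : ∑ x ∈ Iic s, ‖mu 𝕜 x s‖ ≤ 2 ^ (#(Iic s) - 1) :=
  sum_norm_mu_le_two_pow _ (fun _ => mem_Iic.1) fun _ _ _ _ hys => mem_Iic.2 hys

theorem norm_mu_le (x s : S) : ‖mu 𝕜 x s‖ ≤ 2 ^ (#(Iic s) - 1) := by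
  by_cases hxs : x ≤ s
  · exact (single_le_sum (f := fun y => ‖mu 𝕜 y s‖) (fun _ _ => norm_nonneg _)
      (mem_Iic.2 hxs)).trans (sum_Iic_norm_mu_le s)
  · simp [apply_eq_zero_of_not_le hxs]

end Moebius

namespace IncidenceAlgebra

variable {R S : Type*} [NormedRing R]

/-- `transform (zeta R)` is the Schützenberger representation `Γ`; `transform (mu R)` inverts it. -/
noncomputable def transform [LE S] (f : IncidenceAlgebra R S) (a : S → R) : S → R :=
  fun x => ∑' t, f x t * a t

section Bounds

variable [Preorder S] [LocallyFiniteOrderBot S] {f : IncidenceAlgebra R S} {K : ℝ} {a : S → R}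

theorem hasSum_norm_mul_norm_column (f : IncidenceAlgebra R S) (a : S → R) (t : S) :
    HasSum (fun x => ‖f x t‖ * ‖a t‖) ((∑ x ∈ Iic t, ‖f x t‖) * ‖a t‖) := by
  rw [sum_mul]
  refine hasSum_sum_of_ne_finset_zero fun x hx => ?_
  rw [apply_eq_zero_of_not_le (fun h => hx (mem_Iic.2 h)), norm_zero, zero_mul]

theorem tsum_norm_mul_norm_column_le (hf : ∀ t, ∑ x ∈ Iic t, ‖f x t‖ ≤ K) (t : S) :
    ∑' x, ‖f x t‖ * ‖a t‖ ≤ K * ‖a t‖ := by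
  rw [(hasSum_norm_mul_norm_column f a t).tsum_eq]
  exact mul_le_mul_of_nonneg_right (hf t) (norm_nonneg _)

theorem summable_norm_mul_norm (hf : ∀ t, ∑ x ∈ Iic t, ‖f x t‖ ≤ K)
    (ha : Summable fun t => ‖a t‖) :
    Summable (Function.uncurry fun x t => ‖f x t‖ * ‖a t‖) := by
  have hswap : Summable fun p : S × S => ‖f p.2 p.1‖ * ‖a p.1‖ := by
    refine (summable_prod_of_nonneg fun _ => by positivity).2 ⟨fun t => ?_, ?_⟩
    · exact (hasSum_norm_mul_norm_column f a t).summable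
    · refine (ha.mul_left K).of_nonneg_of_le (fun _ => tsum_nonneg fun _ => by positivity)
        (tsum_norm_mul_norm_column_le hf)
  exact hswap.prod_symm

theorem tsum_tsum_norm_mul_norm_le (hf : ∀ t, ∑ x ∈ Iic t, ‖f x t‖ ≤ K)
    (ha : Summable fun t => ‖a t‖) :
    ∑' x, ∑' t, ‖f x t‖ * ‖a t‖ ≤ K * ∑' t, ‖a t‖ := by
  rw [← (summable_norm_mul_norm hf ha).tsum_comm, ← tsum_mul_left]
  exact (summable_norm_mul_norm hf ha).prod_symm.prod.tsum_le_tsum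
    (tsum_norm_mul_norm_column_le hf) (ha.mul_left K)

theorem summable_norm_transform_and_tsum_le (hf : ∀ t, ∑ x ∈ Iic t, ‖f x t‖ ≤ K)
    (ha : Summable fun t => ‖a t‖) :
    Summable (fun x => ‖transform f a x‖) ∧ ∑' x, ‖transform f a x‖ ≤ K * ∑' t, ‖a t‖ := by
  have hsum := summable_norm_mul_norm hf ha
  have hle : ∀ x, ‖transform f a x‖ ≤ ∑' t, ‖f x t‖ * ‖a t‖ := fun x =>
    tsum_of_norm_bounded (hsum.prod_factor x).hasSum fun t => norm_mul_le _ _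
  have hsum' : Summable fun x => ‖transform f a x‖ :=
    hsum.prod.of_nonneg_of_le (fun _ => norm_nonneg _) hle
  exact ⟨hsum', (hsum'.tsum_le_tsum hle hsum.prod).trans (tsum_tsum_norm_mul_norm_le hf ha)⟩

end Bounds

section Composition

variable [CompleteSpace R] [Preorder S] [LocallyFiniteOrder S] [LocallyFiniteOrderBot S]

theorem transform_transform {f g : IncidenceAlgebra R S} {L K : ℝ} (hf : ∀ x t, ‖f x t‖ ≤ L)
    (hg : ∀ s, ∑ t ∈ Iic s, ‖g t s‖ ≤ K) {a : S → R} (ha : Summable fun t => ‖a t‖) :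
    transform f (transform g a) = transform (f * g) a := by
  funext x
  have hga := summable_norm_mul_norm hg ha
  have hrow : ∀ t, Summable fun s => g t s * a s := fun t =>
    (hga.prod_factor t).of_norm_bounded fun s => norm_mul_le _ _
  have hsum : Summable (Function.uncurry fun t s => f x t * (g t s * a s)) :=
    (hga.mul_left L).of_norm_bounded fun p =>
      (norm_mul_le _ _).trans (mul_le_mul (hf x p.1) (norm_mul_le _ _) (norm_nonneg _)
        ((norm_nonneg _).trans (hf x p.1)))
  have hfinite : ∀ s, ∑' t, f x t * (g t s * a s) = (f * g) x s * a s := fun s => by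
    rw [mul_apply, sum_mul, tsum_eq_sum fun t ht => ?_]
    · exact sum_congr rfl fun t _ => (mul_assoc _ _ _).symm
    rcases not_and_or.1 (fun h => ht (mem_Icc.2 h)) with hxt | hts
    · rw [apply_eq_zero_of_not_le hxt, zero_mul]
    · rw [apply_eq_zero_of_not_le hts, zero_mul, mul_zero]
  calc ∑' t, f x t * ∑' s, g t s * a s = ∑' t, ∑' s, f x t * (g t s * a s) :=
        tsum_congr fun t => ((hrow t).tsum_mul_left _).symm
    _ = ∑' s, ∑' t, f x t * (g t s * a s) := hsum.tsum_comm.symm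
    _ = ∑' s, (f * g) x s * a s := tsum_congr hfinite

end Composition

theorem transform_one [Preorder S] [DecidableEq S] (a : S → R) :
    transform 1 a = a := by
  funext x
  simp [transform]

theorem transform_zeta_apply [LE S] [DecidableLE S] (a : S → R) (x : S) :
    transform (zeta R) a x = ∑' t : {t // x ≤ t}, a t := by
  refine (tsum_congr fun t => ?_).trans (tsum_subtype {t | x ≤ t} a).symm
  by_cases h : x ≤ t <;> simp [h]

theorem norm_zeta_le_one [NormOneClass R] [LE S] [DecidableLE S] (x t : S) :
    ‖zeta R x t‖ ≤ 1 := by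
  by_cases h : x ≤ t <;> simp [h]

noncomputable def infConv [Min S] (a b : S → R) (z : S) : R :=
  ∑' p : {p : S × S // p.1 ⊓ p.2 = z}, a (p : S × S).1 * b (p : S × S).2

theorem transform_zeta_infConv [NormOneClass R] [CompleteSpace R] [SemilatticeInf S]
    [DecidableLE S] {a b : S → R} (ha : Summable fun t => ‖a t‖) (hb : Summable fun t => ‖b t‖) :
    transform (zeta R) (infConv a b) = transform (zeta R) a * transform (zeta R) b := by
  funext x
  set a' : S → R := fun t => zeta R x t * a t
  set b' : S → R := fun t => zeta R x t * b t
  have hnorm : ∀ c : S → R, Summable (fun t => ‖c t‖) → Summable fun t => ‖zeta R x t * c t‖ :=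
    fun c hc => hc.of_nonneg_of_le (fun _ => norm_nonneg _) fun t =>
      (norm_mul_le _ _).trans (mul_le_of_le_one_left (norm_nonneg _) (norm_zeta_le_one x t))
  have hfiber : ∀ z, zeta R x z * infConv a b z = infConv a' b' z := fun z => by
    by_cases hxz : x ≤ z
    · rw [zeta_apply, if_pos hxz, one_mul]
      refine tsum_congr fun p => ?_
      obtain ⟨hx1, hx2⟩ := le_inf_iff.1 (p.2 ▸ hxz)
      simp [a', b', hx1, hx2]
    · rw [zeta_apply, if_neg hxz, zero_mul]
      refine (tsum_congr fun p => ?_).trans tsum_zero |>.symm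
      rw [← p.2, le_inf_iff, not_and_or] at hxz
      rcases hxz with h | h <;> simp [a', b', h]
  calc ∑' z, zeta R x z * infConv a b z = ∑' z, infConv a' b' z := tsum_congr hfiber
    _ = ∑' p : S × S, a' p.1 * b' p.2 :=
      ((summable_mul_of_summable_norm (hnorm a ha) (hnorm b hb)).hasSum.tsum_fiberwise
        fun p : S × S => p.1 ⊓ p.2).tsum_eq
    _ = (∑' t, a' t) * ∑' t, b' t :=
      (tsum_mul_tsum_of_summable_norm (hnorm a ha) (hnorm b hb)).symm

end IncidenceAlgebra

abbrev CommSemigroup.semilatticeInfOfIdempotent {S : Type*} [CommSemigroup S]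
    (hidem : ∀ s : S, s * s = s) : SemilatticeInf S where
  le x y := x * y = x
  inf := (· * ·)
  le_refl := hidem
  le_trans x y z hxy hyz := by rw [← hxy, mul_assoc, hyz]
  le_antisymm x y hxy hyx := hxy.symm.trans ((mul_comm x y).trans hyx)
  inf_le_left x y := by rw [mul_right_comm, hidem]
  inf_le_right x y := by rw [mul_assoc, hidem]
  le_inf x y z hxy hxz := by rw [← mul_assoc, hxy, hxz]

theorem schutzRep_algebra_isomorphism_general {S : Type*} [CommSemigroup S]
    (hidem : ∀ s : S, s * s = s) (C : ℕ)
    (hC : ∀ f : S, {y : S | y * f = y}.Finite ∧ {y : S | y * f = y}.ncard ≤ C) :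
    ∃ M : (S → ℂ) → (S → ℂ),
      -- Γ is bounded (continuous) from ℓ¹ to ℓ¹:
      (∀ a : S → ℂ, Summable (fun t => ‖a t‖) →
          Summable (fun x => ‖schutzRep a x‖) ∧
          ∑' x : S, ‖schutzRep a x‖ ≤ C * ∑' t : S, ‖a t‖) ∧
      -- Γ is an algebra homomorphism (convolution to pointwise product):
      (∀ a b : S → ℂ, Summable (fun t => ‖a t‖) → Summable (fun t => ‖b t‖) →
          schutzRep (l1Conv a b) = schutzRep a * schutzRep b) ∧
      -- M is a two-sided inverse of Γ on ℓ¹, of norm at most 2^(C-1):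
      (∀ a : S → ℂ, Summable (fun t => ‖a t‖) →
          (Summable (fun x => ‖M a x‖) ∧
            ∑' x : S, ‖M a x‖ ≤ 2 ^ (C - 1) * ∑' t : S, ‖a t‖) ∧
          schutzRep (M a) = a ∧ M (schutzRep a) = a) := by
  classical
  let := CommSemigroup.semilatticeInfOfIdempotent hidem
  let : LocallyFiniteOrderBot S :=
    LocallyFiniteOrderBot.ofIic S (fun t => (hC t).1.toFinset) fun t _ => (hC t).1.mem_toFinset
  let : LocallyFiniteOrder S :=
    LocallyFiniteOrder.ofFiniteIcc fun _ b => (Set.finite_Iic b).subset Set.Icc_subset_Iic_self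
  have hcard (t : S) : #(Iic t) ≤ C := by
    rw [← Set.ncard_coe_finset, coe_Iic]
    exact (hC t).2
  have hzeta (t : S) : ∑ x ∈ Iic t, ‖zeta ℂ x t‖ ≤ C :=
    (sum_le_card_nsmul _ _ 1 fun x _ => norm_zeta_le_one x t).trans (by simpa using hcard t)
  have hpow (t : S) : (2 : ℝ) ^ (#(Iic t) - 1) ≤ 2 ^ (C - 1) :=
    pow_le_pow_right₀ one_le_two (Nat.sub_le_sub_right (hcard t) 1)
  have hmu (t : S) : ∑ x ∈ Iic t, ‖mu ℂ x t‖ ≤ 2 ^ (C - 1) := (sum_Iic_norm_mu_le t).trans (hpow t)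
  have hΓ : ∀ a : S → ℂ, schutzRep a = transform (zeta ℂ) a := fun a =>
    funext fun x => (transform_zeta_apply a x).symm
  refine ⟨transform (mu ℂ), fun a ha => hΓ a ▸ summable_norm_transform_and_tsum_le hzeta ha,
    fun a b ha hb => by rw [hΓ, hΓ, hΓ]; exact transform_zeta_infConv ha hb,
    fun a ha => ⟨summable_norm_transform_and_tsum_le hmu ha, ?_, ?_⟩⟩
  · rw [hΓ, transform_transform norm_zeta_le_one hmu ha, zeta_mul_mu, transform_one]
  · rw [hΓ, transform_transform (fun x t => (norm_mu_le x t).trans (hpow t)) hzeta ha, mu_mul_zeta,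
      transform_one]

/-- Let `S` be a locally `C`-finite semilattice. Then the Schützenberger
representation `Γ : ℓ¹(S) → ℓ¹(S)`, from the convolution algebra to `ℓ¹(S)` with
pointwise multiplication, is a continuous algebra isomorphism whose inverse has
operator norm at most `2^{C−1}`. -/
theorem schutzRep_algebra_isomorphism {S : Type*} [CommSemigroup S]
    (hidem : ∀ s : S, s * s = s) (C : ℕ) (hCpos : 0 < C)
    (hC : ∀ f : S, {y : S | y * f = y}.Finite ∧ {y : S | y * f = y}.ncard ≤ C) :
    ∃ M : (S → ℂ) → (S → ℂ),
      -- Γ is bounded (continuous) from ℓ¹ to ℓ¹: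
      (∀ a : S → ℂ, Summable (fun t => ‖a t‖) →
          Summable (fun x => ‖schutzRep a x‖) ∧
          ∑' x : S, ‖schutzRep a x‖ ≤ C * ∑' t : S, ‖a t‖) ∧
      -- Γ is an algebra homomorphism (convolution to pointwise product):
      (∀ a b : S → ℂ, Summable (fun t => ‖a t‖) → Summable (fun t => ‖b t‖) →
          schutzRep (l1Conv a b) = schutzRep a * schutzRep b) ∧
      -- M is a two-sided inverse of Γ on ℓ¹, of norm at most 2^(C-1):
      (∀ a : S → ℂ, Summable (fun t => ‖a t‖) →
          (Summable (fun x => ‖M a x‖) ∧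
            ∑' x : S, ‖M a x‖ ≤ 2 ^ (C - 1) * ∑' t : S, ‖a t‖) ∧
          schutzRep (M a) = a ∧ M (schutzRep a) = a) :=
  schutzRep_algebra_isomorphism_general hidem C hC
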